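/- arXiv:1811.10060 — 2 statements merged into one kernel-verified Lean document; each statement's English description precedes it below -/
import Mathlib

section
/- In the 2-group associated to a crossed module (G, H, t, α), group multiplication in G ⋉ H is a functor: if composites (g₁,h₁') ∘ (g₁,h₁) and (g₂,h₂') ∘ (g₂,h₂)—meaning arrows (g₁,h₁): g₁ → t(h₁)g₁, (t(h₁)g₁, h₁'): t(h₁)g₁ → t(h₁'h₁)g₁, etc.—are composable, then the product of the composites equals the composite of the products: ((t(h₁)g₁,h₁')·(t(h₂)g₂,h₂')) ∘ ((g₁,h₁)·(g₂,h₂)) = ((t(h₁)g₁,h₁') ∘ (g₁,h₁)) · ((t(h₂)g₂,h₂') ∘ (g₂,h₂)). -/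
/-- In the 2-group of a crossed module, group multiplication in G ⋉ H is a functor:
the product of composites equals the composite of products. -/
theorem crossedModule_mul_functorial
    {G H : Type*} [Group G] [Group H]
    (t : H →* G) (α : G →* MulAut H)
    (h1 : ∀ g h, t (α g h) = g * t h * g⁻¹)
    (h2 : ∀ h h', α (t h) h' = h * h' * h⁻¹) :
    ∀ (g₁ g₂ : G) (h₁ h₁' h₂ h₂' : H),
    let mul : G × H → G × H → G × H := fun p q => (p.1 * q.1, p.2 * α p.1 q.2)
    -- comp f' f : (t(h)g, h') ∘ (g, h) = (g, h'·h)
    let comp : G × H → G × H → G × H := fun f' f => (f.1, f'.2 * f.2)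
    comp (mul (t h₁ * g₁, h₁') (t h₂ * g₂, h₂')) (mul (g₁, h₁) (g₂, h₂))
      = mul (comp (t h₁ * g₁, h₁') (g₁, h₁)) (comp (t h₂ * g₂, h₂') (g₂, h₂)) := by
  intro g₁ g₂ h₁ h₁' h₂ h₂' mul comp
  simp only [mul, comp, Prod.mk.injEq, map_mul, MulAut.mul_apply]
  constructor
  · trivial
  · rw [h2]
    group
end

section
/- Let (G, H, t, α) be a crossed module, X₀, Y₀, Z₀ be G-torsors, F₁, F₁': X₀ → Y₀ and F₂, F₂': Y₀ → Z₀ equivariant maps, with 2-morphisms η₁ (from F₁ to F₁') and η₂ (from F₂ to F₂') described by maps η_{1,H}: X₀ → H and η_{2,H}: Y₀ → H. Then the two formulas for horizontal composition agree: η_{1,H}(p)·η_{2,H}(F₁'(p)) = η_{2,H}(F₁(p))·η_{1,H}(p) for all p ∈ X₀. -/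
/-- The two formulas for horizontal composition of 2-morphisms agree:
η₁H(p)·η₂H(F₁'(p)) = η₂H(F₁(p))·η₁H(p). -/
theorem torsor_2morphism_horizontal_composition_agree
    {G H X Y Z : Type*} [Group G] [Group H]
    (t : H →* G) (α : G →* MulAut H)
    (hcm1 : ∀ g h, t (α g h) = g * t h * g⁻¹)
    (hcm2 : ∀ h h', α (t h) h' = h * h' * h⁻¹)
    (actX : X → G → X) (actY : Y → G → Y) (actZ : Z → G → Z)
    (hX1 : ∀ x, actX x 1 = x)
    (hXm : ∀ x g g', actX (actX x g) g' = actX x (g * g'))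
    (hXft : ∀ x y : X, ∃! g : G, actX x g = y)
    (hY1 : ∀ y, actY y 1 = y)
    (hYm : ∀ y g g', actY (actY y g) g' = actY y (g * g'))
    (hYfree : ∀ (y : Y) (g g' : G), actY y g = actY y g' → g = g')
    (dY : Y → Y → G) (hdY : ∀ y y', actY y (dY y' y) = y')
    (hZ1 : ∀ z, actZ z 1 = z)
    (hZm : ∀ z g g', actZ (actZ z g) g' = actZ z (g * g'))
    (hZfree : ∀ (z : Z) (g g' : G), actZ z g = actZ z g' → g = g')
    (dZ : Z → Z → G) (hdZ : ∀ z z', actZ z (dZ z' z) = z')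
    (F₁ F₁' : X → Y) (F₂ F₂' : Y → Z)
    (hF₁ : ∀ x g, F₁ (actX x g) = actY (F₁ x) g)
    (hF₁' : ∀ x g, F₁' (actX x g) = actY (F₁' x) g)
    (hF₂ : ∀ y g, F₂ (actY y g) = actZ (F₂ y) g)
    (hF₂' : ∀ y g, F₂' (actY y g) = actZ (F₂' y) g)
    (η₁ : X → H) (η₂ : Y → H)
    (hη₁1 : ∀ p, t (η₁ p) = dY (F₁' p) (F₁ p))
    (hη₁2 : ∀ p g, η₁ (actX p g) = α g⁻¹ (η₁ p))
    (hη₂1 : ∀ q, t (η₂ q) = dZ (F₂' q) (F₂ q))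
    (hη₂2 : ∀ q g, η₂ (actY q g) = α g⁻¹ (η₂ q)) :
    ∀ p : X, η₁ p * η₂ (F₁' p) = η₂ (F₁ p) * η₁ p := by
  intro p
  have hF : F₁' p = actY (F₁ p) (t (η₁ p)) := by rw [hη₁1]; exact (hdY _ _).symm
  rw [hF, hη₂2]
  have : α (t (η₁ p))⁻¹ (η₂ (F₁ p)) = (η₁ p)⁻¹ * η₂ (F₁ p) * (η₁ p)⁻¹⁻¹ := by
    rw [← map_inv t, hcm2]
  rw [this]
  group
end
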